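/- There exists a constant C > 0 such that for all integers 0 ≤ m ≤ n and every 2π-periodic f ∈ L¹(−π, π), the de la Vallée Poussin means satisfy ∫_{−π}^{π} |V_{n,m}[f](x)| dx ≤ C·(1 + ln((n+1)/(m+1)))·∫_{−π}^{π} |f(t)| dt. -/

import Mathlib

/-!
The mean `V_{n,m}[f]` is a periodic convolution of `f` with `Φ_{n,m}/(π(m+1))`, so Fubini and
the translation invariance of `∫ |Φ_{n,m}|` over a period give
`‖V_{n,m}[f]‖₁ ≤ ‖Φ_{n,m}‖₁ ‖f‖₁ / (π(m+1))`. It remains to show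
`‖Φ_{n,m}‖₁ = O((m+1)(1 + log((n+1)/(m+1))))`. As `Φ_{n,m}` is even we integrate over `[0, π]`
and split at `1/(2n-m+1)` and `1/(m+1)`: by `|sin(kx)| ≤ k|sin x|` and `sin(t/2) ≥ t/π`, the
kernel is bounded by `(m+1)(2n-m+1)/2`, by `(m+1)π/(2t)` and by `π²/(2t²)` on the three pieces,
which contribute `O(m+1)`, `O((m+1) log((2n-m+1)/(m+1)))` and `O(m+1)`.
-/

open MeasureTheory Real

/-- The de la Vallée Poussin kernel
`Φ_{n,m}(t) = sin((m+1)t/2)·sin((2n−m+1)t/2)/(2 sin²(t/2))`. -/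
noncomputable def Phi (n m : ℕ) (t : ℝ) : ℝ :=
  Real.sin (((m : ℝ) + 1) * t / 2) * Real.sin ((2 * (n : ℝ) - m + 1) * t / 2) /
    (2 * Real.sin (t / 2) ^ 2)

/-- The de la Vallée Poussin mean
`V_{n,m}[f](x) = (1/(π(m+1))) ∫_{−π}^{π} f(t) Φ_{n,m}(t−x) dt`. -/
noncomputable def vdlP (n m : ℕ) (f : ℝ → ℝ) (x : ℝ) : ℝ :=
  (1 / (π * ((m : ℝ) + 1))) * ∫ t in (-π)..π, f t * Phi n m (t - x)

theorem Real.abs_sin_nat_mul_le (k : ℕ) (x : ℝ) : |sin (k * x)| ≤ k * |sin x| := by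
  induction k with
  | zero => simp
  | succ k ih =>
    calc |sin ((k + 1 : ℕ) * x)| = |sin (k * x) * cos x + cos (k * x) * sin x| := by
          rw [← sin_add]; push_cast; ring_nf
      _ ≤ |sin (k * x)| * |cos x| + |cos (k * x)| * |sin x| := by
          rw [← abs_mul, ← abs_mul]; exact abs_add_le _ _
      _ ≤ k * |sin x| * 1 + 1 * |sin x| := by
          gcongr
          exacts [abs_cos_le_one x, abs_cos_le_one _]
      _ = (k + 1 : ℕ) * |sin x| := by push_cast; ring

theorem Real.div_pi_le_sin_half {t : ℝ} (h₀ : 0 ≤ t) (hπ : t ≤ π) :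
    t / π ≤ sin (t / 2) := by
  have := mul_le_sin (x := t / 2) (by linarith) (by linarith)
  rwa [show 2 / π * (t / 2) = t / π by ring] at this

theorem Function.Periodic.intervalIntegral_comp_sub_left_eq {g : ℝ → ℝ} {a b : ℝ}
    (hg : Function.Periodic g (b - a)) (t : ℝ) :
    ∫ x in a..b, g (t - x) = ∫ x in a..b, g x := by
  have h := hg.intervalIntegral_add_eq (t - b) a
  rw [show t - b + (b - a) = t - a by ring, add_sub_cancel] at h
  rw [intervalIntegral.integral_comp_sub_left, h]

theorem Function.Even.intervalIntegral_neg_eq_two_mul {g : ℝ → ℝ} (hg : Function.Even g)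
    {a : ℝ} (hi : IntervalIntegrable g volume (-a) a) :
    ∫ x in -a..a, g x = 2 * ∫ x in 0..a, g x := by
  have hneg : ∫ x in -a..0, g x = ∫ x in 0..a, g x := by
    simpa [hg _] using (intervalIntegral.integral_comp_neg (a := 0) (b := a) g).symm
  have h0 : (0 : ℝ) ∈ Set.uIcc (-a) a := by
    rcases le_total 0 a with h | h <;> simp [h]
  rw [← intervalIntegral.integral_add_adjacent_intervals
    (hi.mono_set (Set.uIcc_subset_uIcc_left h0)) (hi.mono_set (Set.uIcc_subset_uIcc_right h0)),
    hneg, two_mul]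

theorem integral_const_div_sq {β c : ℝ} (hβ : 0 < β) (hc : 0 < c) (D : ℝ) :
    ∫ t in β..c, D / t ^ 2 = D * (β⁻¹ - c⁻¹) := by
  have hzpow : ∀ t : ℝ, D / t ^ 2 = D * t ^ (-2 : ℤ) := fun t => by
    simp [zpow_neg, div_eq_mul_inv]
  simp_rw [hzpow, intervalIntegral.integral_const_mul]
  rw [integral_zpow (Or.inr ⟨by norm_num, Set.notMem_uIcc_of_lt hβ hc⟩)]
  congr 1
  norm_num
  ring

theorem integral_le_of_le_const_of_le_div_of_le_div_sq {g : ℝ → ℝ} {A B D α β c : ℝ}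
    (hα : 0 < α) (hαβ : α ≤ β) (hβc : β ≤ c) (hg : IntervalIntegrable g volume 0 c)
    (h₁ : ∀ t ∈ Set.Icc 0 α, g t ≤ A) (h₂ : ∀ t ∈ Set.Icc α β, g t ≤ B / t)
    (h₃ : ∀ t ∈ Set.Icc β c, g t ≤ D / t ^ 2) :
    ∫ t in 0..c, g t ≤ A * α + B * log (β / α) + D * (β⁻¹ - c⁻¹) := by
  have hβ : 0 < β := hα.trans_le hαβ
  have hsub : ∀ {s u}, 0 ≤ s → s ≤ u → u ≤ c → IntervalIntegrable g volume s u :=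
    fun hs hsu huc => by
      refine hg.mono_set ?_
      rw [Set.uIcc_of_le hsu, Set.uIcc_of_le (hs.trans (hsu.trans huc))]
      exact Set.Icc_subset_Icc hs huc
  have hg₁ := hsub le_rfl hα.le (hαβ.trans hβc)
  have hg₂ := hsub hα.le hαβ hβc
  have hg₃ := hsub hβ.le hβc le_rfl
  rw [← intervalIntegral.integral_add_adjacent_intervals (hg₁.trans hg₂) hg₃,
    ← intervalIntegral.integral_add_adjacent_intervals hg₁ hg₂]
  gcongr
  · calc ∫ t in 0..α, g t ≤ ∫ _ in 0..α, A :=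
          intervalIntegral.integral_mono_on hα.le hg₁ intervalIntegrable_const h₁
      _ = A * α := by simp [mul_comm]
  · calc ∫ t in α..β, g t ≤ ∫ t in α..β, B / t := by
          refine intervalIntegral.integral_mono_on hαβ hg₂ ?_ h₂
          refine (continuousOn_const.div continuousOn_id fun t ht => ?_).intervalIntegrable
          exact (hα.trans_le (Set.uIcc_of_le hαβ ▸ ht).1).ne'
      _ = B * log (β / α) := by
          simp only [div_eq_mul_inv, intervalIntegral.integral_const_mul,
            integral_inv_of_pos hα hβ]
  · calc ∫ t in β..c, g t ≤ ∫ t in β..c, D / t ^ 2 := by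
          refine intervalIntegral.integral_mono_on hβc hg₃ ?_ h₃
          refine (continuousOn_const.div (continuousOn_pow 2) fun t ht => ?_).intervalIntegrable
          exact pow_ne_zero 2 (hβ.trans_le (Set.uIcc_of_le hβc ▸ ht).1).ne'
      _ = D * (β⁻¹ - c⁻¹) := integral_const_div_sq hβ (hβ.trans_le hβc) D

theorem integral_abs_integral_mul_comp_sub_le {f K : ℝ → ℝ} {a b : ℝ} (hab : a < b)
    (hKm : Measurable K) (hK : Function.Periodic K (b - a))
    (hKi : IntervalIntegrable K volume a b) (hf : IntervalIntegrable f volume a b) :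
    ∫ x in a..b, |∫ t in a..b, f t * K (t - x)| ≤
      (∫ t in a..b, |K t|) * ∫ t in a..b, |f t| := by
  set ν := volume.restrict (Set.Ioc a b)
  set F : ℝ × ℝ → ℝ := fun p => f p.2 * K (p.2 - p.1)
  have hKt : ∀ t, Integrable (fun x => K (t - x)) ν := fun t => by
    refine (intervalIntegrable_iff_integrableOn_Ioc_of_le hab.le).1 ?_
    simpa using (hK.intervalIntegrable (by linarith) (t := a) (by simpa using hKi)
      (t - a) (t - b)).comp_sub_left t
  have hfν : Integrable f ν := (intervalIntegrable_iff_integrableOn_Ioc_of_le hab.le).1 hf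
  have hnormF : ∀ t, ∫ x, ‖F (x, t)‖ ∂ν = |f t| * ∫ t in a..b, |K t| := fun t => by
    simp only [F, norm_mul, Real.norm_eq_abs, integral_const_mul]
    have habsK : Function.Periodic (fun x => |K x|) (b - a) := fun x => by simp only [hK x]
    rw [← habsK.intervalIntegral_comp_sub_left_eq t, intervalIntegral.integral_of_le hab.le]
  have hF : Integrable F (ν.prod ν) := by
    refine (integrable_prod_iff' ?_).2 ⟨ae_of_all _ fun t => (hKt t).const_mul (f t), ?_⟩
    · exact hfν.aestronglyMeasurable.comp_snd.mul
        (hKm.comp (measurable_snd.sub measurable_fst)).aestronglyMeasurable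
    · simp_rw [hnormF]
      exact hfν.abs.mul_const _
  calc ∫ x in a..b, |∫ t in a..b, f t * K (t - x)| = ∫ x, ‖∫ t, F (x, t) ∂ν‖ ∂ν := by
        simp only [intervalIntegral.integral_of_le hab.le, Real.norm_eq_abs, F]
        rfl
    _ ≤ ∫ x, ∫ t, ‖F (x, t)‖ ∂ν ∂ν :=
        integral_mono_of_nonneg (ae_of_all _ fun _ => norm_nonneg _) hF.norm.integral_prod_left
          (ae_of_all _ fun _ => norm_integral_le_integral_norm _)
    _ = ∫ t, ∫ x, ‖F (x, t)‖ ∂ν ∂ν := integral_integral_swap hF.norm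
    _ = (∫ t, |f t| ∂ν) * ∫ t in a..b, |K t| := by simp_rw [hnormF, integral_mul_const]
    _ = _ := by rw [mul_comm, intervalIntegral.integral_of_le hab.le (f := fun t => |f t|)]

section Kernel

variable {n m : ℕ}

theorem Nat.cast_two_mul_sub_add_one (h : m ≤ 2 * n) :
    2 * (n : ℝ) - m + 1 = ((2 * n - m + 1 : ℕ) : ℝ) := by
  rw [Nat.cast_add, Nat.cast_sub h]
  push_cast
  ring

theorem abs_sin_mul_half_le (k : ℕ) (t : ℝ) : |sin (k * t / 2)| ≤ k * |sin (t / 2)| := by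
  rw [mul_div_assoc]; exact abs_sin_nat_mul_le k _

theorem abs_Phi (n m : ℕ) (t : ℝ) :
    |Phi n m t| = |sin (((m : ℝ) + 1) * t / 2)| * |sin ((2 * (n : ℝ) - m + 1) * t / 2)| /
      (2 * sin (t / 2) ^ 2) := by
  rw [Phi, abs_div, abs_mul, abs_of_nonneg (by positivity : (0 : ℝ) ≤ 2 * sin (t / 2) ^ 2)]

theorem Phi_even (n m : ℕ) : Function.Even (Phi n m) := fun t => by
  simp only [Phi, mul_neg, neg_div, sin_neg, neg_sq]
  ring

theorem Phi_periodic (h : m ≤ 2 * n) : Function.Periodic (Phi n m) (2 * π) := fun t => by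
  have hsign : (-1 : ℝ) ^ (m + 1) * (-1) ^ (2 * n - m + 1) = 1 := by
    rw [← pow_add, show m + 1 + (2 * n - m + 1) = 2 * (n + 1) by omega, pow_mul]
    norm_num
  have hM : ((m : ℝ) + 1) * (t + 2 * π) / 2 = (m + 1) * t / 2 + (m + 1 : ℕ) * π := by
    push_cast; ring
  have hN : (2 * (n : ℝ) - m + 1) * (t + 2 * π) / 2 =
      (2 * n - m + 1) * t / 2 + (2 * n - m + 1 : ℕ) * π := by
    rw [Nat.cast_two_mul_sub_add_one h]; ring
  rw [Phi, Phi, hM, hN, sin_add_nat_mul_pi, sin_add_nat_mul_pi, add_div,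
    show 2 * π / 2 = π by ring, sin_add_pi, neg_sq]
  linear_combination (sin ((m + 1) * t / 2) * sin ((2 * n - m + 1) * t / 2) /
    (2 * sin (t / 2) ^ 2)) * hsign

theorem measurable_Phi (n m : ℕ) : Measurable (Phi n m) := by
  unfold Phi; fun_prop

theorem abs_Phi_le (h : m ≤ 2 * n) (t : ℝ) :
    |Phi n m t| ≤ ((m : ℝ) + 1) * (2 * n - m + 1) / 2 := by
  have hN : (0 : ℝ) ≤ 2 * n - m + 1 := by
    rw [Nat.cast_two_mul_sub_add_one h]; positivity
  rcases eq_or_ne (sin (t / 2)) 0 with hs | hs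
  · simp [Phi, hs]; positivity
  have hsinM := abs_sin_mul_half_le (m + 1) t
  have hsinN := abs_sin_mul_half_le (2 * n - m + 1) t
  push_cast at hsinM
  rw [← Nat.cast_two_mul_sub_add_one h] at hsinN
  rw [abs_Phi, div_le_iff₀ (by positivity)]
  calc _ ≤ ((m : ℝ) + 1) * |sin (t / 2)| * ((2 * n - m + 1) * |sin (t / 2)|) := by gcongr
    _ = _ := by rw [← sq_abs (sin _)]; ring

theorem intervalIntegrable_Phi (h : m ≤ 2 * n) (a b : ℝ) :
    IntervalIntegrable (Phi n m) volume a b :=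
  intervalIntegrable_const.mono_fun' (measurable_Phi n m).aestronglyMeasurable
    (ae_of_all _ (abs_Phi_le h))

theorem abs_Phi_le_div {t : ℝ} (h₀ : 0 < t) (hπ : t ≤ π) :
    |Phi n m t| ≤ ((m : ℝ) + 1) * π / 2 / t := by
  have hs := div_pi_le_sin_half h₀.le hπ
  have hs₀ : 0 < sin (t / 2) := (div_pos h₀ pi_pos).trans_le hs
  have hsinM := abs_sin_mul_half_le (m + 1) t
  push_cast at hsinM
  rw [abs_of_pos hs₀] at hsinM
  calc |Phi n m t| ≤ ((m : ℝ) + 1) * sin (t / 2) * 1 / (2 * sin (t / 2) ^ 2) := by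
        rw [abs_Phi]; gcongr; exact abs_sin_le_one _
    _ = ((m : ℝ) + 1) / 2 / sin (t / 2) := by field_simp
    _ ≤ ((m : ℝ) + 1) / 2 / (t / π) := by gcongr
    _ = _ := by field_simp

theorem abs_Phi_le_div_sq {t : ℝ} (h₀ : 0 < t) (hπ : t ≤ π) :
    |Phi n m t| ≤ π ^ 2 / 2 / t ^ 2 := by
  have hs := div_pi_le_sin_half h₀.le hπ
  have hs₀ : 0 < t / π := div_pos h₀ pi_pos
  calc |Phi n m t| ≤ 1 * 1 / (2 * sin (t / 2) ^ 2) := by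
        rw [abs_Phi]; gcongr <;> exact abs_sin_le_one _
    _ ≤ 1 * 1 / (2 * (t / π) ^ 2) := by gcongr
    _ = _ := by field_simp

theorem integral_abs_Phi_le (hmn : m ≤ n) :
    ∫ t in -π..π, |Phi n m t| ≤
      ((m : ℝ) + 1) * (1 + π * log 2 + π ^ 2 + π * log (((n : ℝ) + 1) / ((m : ℝ) + 1))) := by
  set M : ℝ := (m : ℝ) + 1
  set N : ℝ := 2 * (n : ℝ) - m + 1
  have h2n : m ≤ 2 * n := by omega
  have hnm : (m : ℝ) ≤ n := by exact_mod_cast hmn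
  have hM : 0 < M := by positivity
  have hMN : M ≤ N := by linarith
  have hN : N ≤ 2 * ((n : ℝ) + 1) := by linarith [(m.cast_nonneg : (0 : ℝ) ≤ m)]
  have hN₀ : 0 < N := hM.trans_le hMN
  have hMπ : M⁻¹ ≤ π := (inv_le_one_of_one_le₀ (by simp [M])).trans (by linarith [pi_gt_three])
  have heven : Function.Even (fun t => |Phi n m t|) := fun t => by simp only [Phi_even n m t]
  rw [heven.intervalIntegral_neg_eq_two_mul (intervalIntegrable_Phi h2n _ _).abs]
  have hsplit := integral_le_of_le_const_of_le_div_of_le_div_sq (g := fun t => |Phi n m t|)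
    (inv_pos.2 hN₀) (inv_anti₀ hM hMN) hMπ (intervalIntegrable_Phi h2n _ _).abs
    (fun t _ => abs_Phi_le h2n t)
    (fun t ht => abs_Phi_le_div ((inv_pos.2 hN₀).trans_le ht.1) (ht.2.trans hMπ))
    (fun t ht => abs_Phi_le_div_sq ((inv_pos.2 hM).trans_le ht.1) ht.2)
  have hlog : log (M⁻¹ / N⁻¹) ≤ log 2 + log (((n : ℝ) + 1) / M) := by
    rw [← log_mul two_ne_zero (by positivity), inv_div_inv]
    exact log_le_log (div_pos hN₀ hM) (by rw [← mul_div_assoc]; gcongr)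
  rw [inv_inv, show M * N / 2 * N⁻¹ = M / 2 by field_simp [hN₀.ne']] at hsplit
  calc 2 * ∫ t in 0..π, |Phi n m t|
      ≤ 2 * (M / 2 + M * π / 2 * log (M⁻¹ / N⁻¹) + π ^ 2 / 2 * (M - π⁻¹)) := by gcongr
    _ ≤ 2 * (M / 2 + M * π / 2 * (log 2 + log (((n : ℝ) + 1) / M)) + π ^ 2 / 2 * M) := by
        gcongr
        exact sub_le_self _ (inv_pos.2 pi_pos).le
    _ = _ := by ring

end Kernel

/-- `L¹`-estimate for the de la Vallée Poussin means:
`∫_{−π}^{π} |V_{n,m}[f]| ≤ C(1 + ln((n+1)/(m+1))) ∫_{−π}^{π} |f|`. -/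
theorem vdlP_L1_estimate :
    ∃ C : ℝ, 0 < C ∧ ∀ m n : ℕ, m ≤ n → ∀ f : ℝ → ℝ,
      Measurable f → Function.Periodic f (2 * π) →
      IntervalIntegrable f volume (-π) π →
      (∫ x in (-π)..π, |vdlP n m f x|) ≤
        C * (1 + Real.log (((n : ℝ) + 1) / ((m : ℝ) + 1))) * ∫ t in (-π)..π, |f t| := by
  refine ⟨(1 + π * log 2 + π ^ 2) / π, by positivity, fun m n hmn f _ _ hf => ?_⟩
  set K := 1 + π * log 2 + π ^ 2
  set L := log (((n : ℝ) + 1) / ((m : ℝ) + 1))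
  set c := 1 / (π * ((m : ℝ) + 1)) with hc
  have hc₀ : 0 < c := by positivity
  have hL : 0 ≤ L := log_nonneg <| (one_le_div (by positivity)).2 (by simpa using hmn)
  have hKπ : 1 ≤ K / π := by
    rw [one_le_div pi_pos]; nlinarith [pi_gt_three, log_nonneg one_le_two]
  have hf₁ : 0 ≤ ∫ t in (-π)..π, |f t| :=
    intervalIntegral.integral_nonneg (by linarith [pi_pos]) fun _ _ => abs_nonneg _
  have hconv := integral_abs_integral_mul_comp_sub_le (neg_lt_self pi_pos) (measurable_Phi n m)
    (by rw [sub_neg_eq_add, ← two_mul]; exact Phi_periodic (by omega))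
    (intervalIntegrable_Phi (by omega) _ _) hf
  calc ∫ x in (-π)..π, |vdlP n m f x|
      = c * ∫ x in (-π)..π, |∫ t in (-π)..π, f t * Phi n m (t - x)| := by
        simp only [vdlP, abs_mul, intervalIntegral.integral_const_mul]
        rw [abs_of_pos hc₀]
    _ ≤ c * ((∫ t in (-π)..π, |Phi n m t|) * ∫ t in (-π)..π, |f t|) := by gcongr
    _ ≤ c * (((m : ℝ) + 1) * (K + π * L) * ∫ t in (-π)..π, |f t|) := by
        gcongr
        exact (integral_abs_Phi_le hmn).trans_eq (by ring)
    _ = (K / π + L) * ∫ t in (-π)..π, |f t| := by rw [hc]; field_simp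
    _ ≤ K / π * (1 + L) * ∫ t in (-π)..π, |f t| := by gcongr; nlinarith
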